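/- Let 𝔫 be a V-stability condition of degree d on a finite connected multigraph Γ. Then: (1) the semistable set 𝒫_𝔫 is a finite upper subset of the poset 𝕆^d(Γ); (2) for every (Γ∖S, D) ∈ 𝒫_𝔫, if G₁,…,G_h are the connected components of Γ∖S, then for each i the vertex set V(G_i) belongs to the extended degeneracy subset 𝒟̂(𝔫) and D_{V(G_i)} + e_S(V(G_i)) = 𝔫_{V(G_i)}, where 𝔫 denotes the extended V-function. -/

import Mathlib

noncomputable section

attribute [local instance 10] Classical.propDecidable

/-- A finite multigraph on vertex type `V` with edge type `E`: each edge is given a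
reference source and target vertex. Loops and multiple edges are allowed. -/
structure Multigraph (V E : Type) where
  src : E → V
  tgt : E → V

/-- `A` is a disjoint union of elements of the class `D`. -/
def IsDisjUnionOf {V : Type} [DecidableEq V] (D : Set (Finset V)) (A : Finset V) : Prop :=
  ∃ C : Finset (Finset V), (∀ X ∈ C, X ∈ D) ∧
    (C : Set (Finset V)).Pairwise (fun X Y => Disjoint X Y) ∧ C.sup id = A

/-- An ordered partition of the vertex set: a list of nonempty, pairwise disjoint
subsets covering every vertex. -/
def IsOrdPart {V : Type} (L : List (Finset V)) : Prop :=
  (∀ A ∈ L, A.Nonempty) ∧ L.Pairwise (fun A B => Disjoint A B) ∧ ∀ v : V, ∃ A ∈ L, v ∈ A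

/-- The index of the part of `L` containing `v`. -/
def partIdx {V : Type} [DecidableEq V] (L : List (Finset V)) (v : V) : ℕ :=
  L.findIdx (fun A => decide (v ∈ A))

/-- The union of the first `i` parts of `L`. -/
def unionUpTo {V : Type} [DecidableEq V] (L : List (Finset V)) (i : ℕ) : Finset V :=
  (L.take i).foldr (· ∪ ·) ∅

/-- `D_W`, the total value of the divisor `Dv` on `W`. -/
def divSum {V : Type} [Fintype V] (Dv : V → ℤ) (W : Finset V) : ℤ := ∑ v ∈ W, Dv v

/-- `𝕆^d(Γ)`: pairs (removed edge set `S`, divisor of total degree `d - |S|`),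
representing the pair `(Γ∖S, D)`. -/
def OOset {V E : Type} [Fintype V] (d : ℤ) : Set (Finset E × (V → ℤ)) :=
  {p | divSum p.2 Finset.univ = d - (p.1.card : ℤ)}

/-- `𝒫(Γ∖S)` for a subset `P ⊆ 𝕆^d(Γ)`. -/
def PAt {V E : Type} (P : Set (Finset E × (V → ℤ))) (S : Finset E) : Set (V → ℤ) :=
  {Dv | (S, Dv) ∈ P}

namespace Multigraph

variable {V E V' E' : Type}
variable [Fintype V] [DecidableEq V] [Fintype E] [DecidableEq E]
variable [Fintype V'] [DecidableEq V'] [Fintype E'] [DecidableEq E']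
variable (G : Multigraph V E) (G' : Multigraph V' E')

/-- The number of edges in `T` joining `W₁` and `W₂`. -/
def valBtwIn (T : Finset E) (W₁ W₂ : Finset V) : ℕ :=
  (T.filter (fun e => (G.src e ∈ W₁ ∧ G.tgt e ∈ W₂) ∨ (G.src e ∈ W₂ ∧ G.tgt e ∈ W₁))).card

/-- `val(W₁, W₂)`: the number of edges of `Γ` joining `W₁` and `W₂`. -/
def valBtw (W₁ W₂ : Finset V) : ℕ := G.valBtwIn Finset.univ W₁ W₂

/-- `val(W) := val(W, Wᶜ)`. -/
def valOf (W : Finset V) : ℕ := G.valBtw W Wᶜ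

/-- `e_S(W)`: the number of edges in `S` with both endpoints in `W`. -/
def eIn (S : Finset E) (W : Finset V) : ℕ :=
  (S.filter (fun e => G.src e ∈ W ∧ G.tgt e ∈ W)).card

/-- The edges of the induced subgraph `Γ[W]`. -/
def edgesIn (W : Finset V) : Finset E :=
  Finset.univ.filter (fun e => G.src e ∈ W ∧ G.tgt e ∈ W)

/-- One-step adjacency inside the vertex set `W` using edges from `T`. -/
def Step (T : Finset E) (W : Finset V) (a b : V) : Prop :=
  a ∈ W ∧ b ∈ W ∧ ∃ e ∈ T, (G.src e = a ∧ G.tgt e = b) ∨ (G.src e = b ∧ G.tgt e = a)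

def Linked (T : Finset E) (W : Finset V) : V → V → Prop :=
  Relation.ReflTransGen (G.Step T W)

/-- The graph with vertex set `W` and those edges of `T` joining vertices of `W`
is nonempty and connected. -/
def IsConn (T : Finset E) (W : Finset V) : Prop :=
  W.Nonempty ∧ ∀ a ∈ W, ∀ b ∈ W, G.Linked T W a b

/-- `Con(Γ)`: nonempty subsets with connected induced subgraph. -/
def Con : Set (Finset V) := {W | G.IsConn Finset.univ W}

/-- `BCon(Γ)`: biconnected subsets. -/
def BCon : Set (Finset V) := {W | G.IsConn Finset.univ W ∧ G.IsConn Finset.univ Wᶜ}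

/-- The vertex set of the connected component of `v` in `(W, T)`. -/
def comp (T : Finset E) (W : Finset V) (v : V) : Finset V :=
  W.filter (fun u => G.Linked T W v u)

/-- The vertex sets of the connected components of `(W, T)`. -/
def comps (T : Finset E) (W : Finset V) : Finset (Finset V) :=
  W.image (G.comp T W)

/-- The vertex sets of the connected components of the spanning subgraph `Γ∖S`. -/
def compsRem (S : Finset E) : Finset (Finset V) := G.comps Sᶜ Finset.univ

/-- `W` is `𝔫`-degenerate. -/
def Degen (n : Finset V → ℤ) (d : ℤ) (W : Finset V) : Prop :=
  n W + n Wᶜ + (G.valOf W : ℤ) - d = 0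

/-- `W ∈ 𝒟(𝔫)`: a biconnected `𝔫`-degenerate subset. -/
def InDeg (n : Finset V → ℤ) (d : ℤ) (W : Finset V) : Prop :=
  W ∈ G.BCon ∧ G.Degen n d W

def triSum (n : Finset V → ℤ) (d : ℤ) (W₁ W₂ W₃ : Finset V) : ℤ :=
  n W₁ + n W₂ + n W₃ + (G.valBtw W₁ W₂ : ℤ) + (G.valBtw W₁ W₃ : ℤ) +
    (G.valBtw W₂ W₃ : ℤ) - d

/-- A V-stability condition of degree `d` on `Γ` (the values of `n` outside
`BCon(Γ)` are irrelevant). -/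
structure IsVStab (d : ℤ) (n : Finset V → ℤ) : Prop where
  one : ∀ W ∈ G.BCon,
    n W + n Wᶜ + (G.valOf W : ℤ) - d = 0 ∨ n W + n Wᶜ + (G.valOf W : ℤ) - d = 1
  two_deg : ∀ W₁ W₂ W₃ : Finset V, W₁ ∈ G.BCon → W₂ ∈ G.BCon → W₃ ∈ G.BCon →
    Disjoint W₁ W₂ → Disjoint W₁ W₃ → Disjoint W₂ W₃ → W₁ ∪ W₂ ∪ W₃ = Finset.univ →
    ((G.Degen n d W₁ → G.Degen n d W₂ → G.Degen n d W₃) ∧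
     (G.Degen n d W₁ → G.Degen n d W₃ → G.Degen n d W₂) ∧
     (G.Degen n d W₂ → G.Degen n d W₃ → G.Degen n d W₁))
  two_sum : ∀ W₁ W₂ W₃ : Finset V, W₁ ∈ G.BCon → W₂ ∈ G.BCon → W₃ ∈ G.BCon →
    Disjoint W₁ W₂ → Disjoint W₁ W₃ → Disjoint W₂ W₃ → W₁ ∪ W₂ ∪ W₃ = Finset.univ →
    ((¬ G.Degen n d W₁ ∧ ¬ G.Degen n d W₂ ∧ ¬ G.Degen n d W₃ →
        G.triSum n d W₁ W₂ W₃ = 1 ∨ G.triSum n d W₁ W₂ W₃ = 2) ∧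
     ((G.Degen n d W₁ ∧ ¬ G.Degen n d W₂ ∧ ¬ G.Degen n d W₃) ∨
      (¬ G.Degen n d W₁ ∧ G.Degen n d W₂ ∧ ¬ G.Degen n d W₃) ∨
      (¬ G.Degen n d W₁ ∧ ¬ G.Degen n d W₂ ∧ G.Degen n d W₃) →
        G.triSum n d W₁ W₂ W₃ = 1) ∧
     (G.Degen n d W₁ ∧ G.Degen n d W₂ ∧ G.Degen n d W₃ → G.triSum n d W₁ W₂ W₃ = 0))

/-- The extended degeneracy subset associated to an abstract class `D` of subsets:
`V(Γ)` together with the connected `W` all of whose complementary components lie in `D`. -/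
def ExtOf (D : Set (Finset V)) : Set (Finset V) :=
  {W | W = Finset.univ ∨ (W ∈ G.Con ∧ ∀ C ∈ G.comps Finset.univ Wᶜ, C ∈ D)}

/-- `𝒟̂(𝔫)`, the extended degeneracy subset of a V-stability. -/
def ExtDeg (n : Finset V → ℤ) (d : ℤ) : Set (Finset V) :=
  G.ExtOf {W | G.InDeg n d W}

/-- The value of the extended V-function on a connected subset. -/
def connVal (n : Finset V → ℤ) (d : ℤ) (W : Finset V) : ℤ :=
  d - (∑ C ∈ G.comps Finset.univ Wᶜ, n C) - (G.valOf W : ℤ) +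
    (((G.comps Finset.univ Wᶜ).filter (fun C => ¬ G.InDeg n d C)).card : ℤ)

/-- The extended V-function of `𝔫`, defined on all subsets of `V(Γ)`. -/
def extendV (n : Finset V → ℤ) (d : ℤ) (W : Finset V) : ℤ :=
  ∑ C ∈ G.comps Finset.univ W, G.connVal n d C

/-- The head (target) of the edge `e` under the orientation datum `o`. -/
def orientHead (o : E → Bool) (e : E) : V := if o e then G.tgt e else G.src e

/-- `D(𝒪)` for the partial orientation given by the edges `A` oriented by `o`. -/
def divOrient (A : Finset E) (o : E → Bool) : V → ℤ :=
  fun v => ((A.filter (fun e => G.orientHead o e = v)).card : ℤ)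

/-- `p ≥ q` in `𝕆(Γ)`. -/
def OOge (p q : Finset E × (V → ℤ)) : Prop :=
  p.1 ⊆ q.1 ∧ ∃ o : E → Bool, q.2 = p.2 - G.divOrient (q.1 \ p.1) o

/-- `P` is an upper subset of `𝕆^d(Γ)`. -/
def IsUpper (d : ℤ) (P : Set (Finset E × (V → ℤ))) : Prop :=
  P ⊆ OOset d ∧ ∀ p ∈ OOset d, ∀ q ∈ P, G.OOge p q → p ∈ P

/-- The semistable set `𝒫_𝔫 ⊆ 𝕆^d(Γ)` of a V-stability condition. -/
def Pss (n : Finset V → ℤ) (d : ℤ) : Set (Finset E × (V → ℤ)) :=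
  {p | p ∈ OOset d ∧ ∀ W ∈ G.BCon, n W ≤ divSum p.2 W + (G.eIn p.1 W : ℤ)}

/-- `𝒫_𝔫(Γ∖S)`. -/
def PssAt (n : Finset V → ℤ) (d : ℤ) (S : Finset E) : Set (V → ℤ) :=
  {Dv | (S, Dv) ∈ G.Pss n d}

/-- The polystable set `𝒫^{ps}_𝔫`. -/
def Pps (n : Finset V → ℤ) (d : ℤ) : Set (Finset E × (V → ℤ)) :=
  {p | p ∈ G.Pss n d ∧ ∀ W, G.InDeg n d W →
    divSum p.2 W + (G.eIn p.1 W : ℤ) = n W →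
    ∀ e : E, ¬ (G.src e ∈ W ↔ G.tgt e ∈ W) → e ∈ p.1}

/-- `𝒫^{ps}_𝔫(Γ∖S)`. -/
def PpsAt (n : Finset V → ℤ) (d : ℤ) (S : Finset E) : Set (V → ℤ) :=
  {Dv | (S, Dv) ∈ G.Pps n d}

/-- A degeneracy subset for `Γ`. -/
structure IsDegSubset (D : Set (Finset V)) : Prop where
  subset : ∀ W ∈ D, W ∈ G.BCon
  compl : ∀ W ∈ D, Wᶜ ∈ D
  union : ∀ W₁ W₂ : Finset V, W₁ ∈ D → W₂ ∈ D → Disjoint W₁ W₂ →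
    W₁ ∪ W₂ ∈ G.BCon → W₁ ∪ W₂ ∈ D

/-- The spanning subgraph `Γ∖S` is `D`-admissible. -/
def AdmRem (D : Set (Finset V)) (S : Finset E) : Prop :=
  ∀ C ∈ G.compsRem S, C ∈ G.ExtOf D

/-- `b₀(Γ∖S)`: the number of connected components of `Γ∖S`. -/
def b0Rem (S : Finset E) : ℕ := (G.compsRem S).card

/-- The spanning subgraph `Γ∖S` is a forest. -/
def ForestRem (S : Finset E) : Prop :=
  Sᶜ.card + G.b0Rem S = Fintype.card V

/-- `Γ∖S` is a minimal `D`-admissible spanning subgraph. -/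
def MinAdm (D : Set (Finset V)) (S : Finset E) : Prop :=
  G.AdmRem D S ∧ ∀ S' : Finset E, S ⊆ S' → G.AdmRem D S' → S' = S

/-- The `D`-complexity of `Γ∖S`: the number of `D`-admissible spanning forests of `Γ`
contained in `Γ∖S`. -/
def cD (D : Set (Finset V)) (S : Finset E) : ℕ :=
  ((Finset.univ : Finset (Finset E)).filter
    (fun F => S ⊆ F ∧ G.ForestRem F ∧ G.AdmRem D F)).card

/-- `b₁(Γ)`, the first Betti number of `Γ`. -/
def b1 : ℤ := (Fintype.card E : ℤ) - (Fintype.card V : ℤ) + (G.b0Rem ∅ : ℤ)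

/-- A `D`-forest function of degree `d` (encoded as a total function whose values
matter only on the minimal `D`-admissible spanning subgraphs). -/
def IsForestFun (D : Set (Finset V)) (d : ℤ) (I : Finset E → (V → ℤ)) : Prop :=
  ∀ S, G.MinAdm D S → divSum (I S) Finset.univ = d - G.b1 - (G.b0Rem S : ℤ) + 1

/-- `𝕆^d_D(Γ)`. -/
def OOD (D : Set (Finset V)) (d : ℤ) : Set (Finset E × (V → ℤ)) :=
  {p | p ∈ OOset d ∧ G.AdmRem D p.1}

/-- `P` is an upper subset of `𝕆^d_D(Γ)`. -/
def IsUpperD (D : Set (Finset V)) (d : ℤ) (P : Set (Finset E × (V → ℤ))) : Prop :=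
  P ⊆ G.OOD D d ∧ ∀ p ∈ G.OOD D d, ∀ q ∈ P, G.OOge p q → p ∈ P

/-- The BD-set of a forest function: the smallest upper subset of `𝕆^d_D(Γ)`
containing all the pairs `(F, I(F))` for `F` a minimal `D`-admissible spanning
subgraph. -/
def BDset (D : Set (Finset V)) (d : ℤ) (I : Finset E → (V → ℤ)) :
    Set (Finset E × (V → ℤ)) :=
  ⋂₀ {P | G.IsUpperD D d P ∧ ∀ S, G.MinAdm D S → (S, I S) ∈ P}

/-- `BD_I(Γ∖S)`. -/
def BDAt (D : Set (Finset V)) (d : ℤ) (I : Finset E → (V → ℤ)) (S : Finset E) :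
    Set (V → ℤ) :=
  {Dv | (S, Dv) ∈ G.BDset D d I}

/-- The divergence (chip-firing) of the function `f` on the subgraph with edge set `T`. -/
def divT (T : Finset E) (f : V → ℤ) : V → ℤ := fun v =>
  ∑ e ∈ T, ((if G.tgt e = v then f (G.src e) - f (G.tgt e) else 0) +
            (if G.src e = v then f (G.tgt e) - f (G.src e) else 0))

/-- Two divisors are chip-firing equivalent on `Γ∖S`, i.e. their difference is a
principal divisor of `Γ∖S`; equivalently `π_{Γ∖S}(D₁) = π_{Γ∖S}(D₂)` in `Pic(Γ∖S)`. -/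
def ChipEq (S : Finset E) (D₁ D₂ : V → ℤ) : Prop :=
  ∃ f : V → ℤ, D₂ = D₁ + G.divT Sᶜ f

/-- `E_G(V_•)`: the edges of the subgraph with edge set `T` joining two distinct
parts of the ordered partition `L`. -/
def crossEdges (T : Finset E) (L : List (Finset V)) : Finset E :=
  T.filter (fun e => partIdx L (G.src e) ≠ partIdx L (G.tgt e))

/-- `D(𝒪_G(V_•))`: the outgoing divisor of the partial orientation induced by the
ordered partition `L` on the subgraph with edge set `T` (each crossing edge is
oriented from the lower-indexed part towards the higher-indexed part). -/
def divOP (T : Finset E) (L : List (Finset V)) : V → ℤ := fun v =>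
  ((T.filter (fun e =>
      (G.tgt e = v ∧ partIdx L (G.src e) < partIdx L (G.tgt e)) ∨
      (G.src e = v ∧ partIdx L (G.tgt e) < partIdx L (G.src e)))).card : ℤ)

/-- Condition (a) of the definition of a PT-assignment at the spanning subgraph `Γ∖S`:
the map `π` from `P(Γ∖S)` to the Picard group surjects onto `Pic^δ` for some degree
assignment `δ` on the components with total sum `d - |S|`. -/
def PTcondA (d : ℤ) (P : Set (Finset E × (V → ℤ))) (S : Finset E) : Prop :=
  ∃ δ : Finset V → ℤ, (∑ C ∈ G.compsRem S, δ C) = d - (S.card : ℤ) ∧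
    ∀ D' : V → ℤ, (∀ C ∈ G.compsRem S, divSum D' C = δ C) →
      ∃ D₀ ∈ PAt P S, G.ChipEq S D₀ D'

/-- Condition (b) of the definition of a PT-assignment at the spanning subgraph `Γ∖S`. -/
def PTcondB (D : Set (Finset V)) (P : Set (Finset E × (V → ℤ))) (S : Finset E) : Prop :=
  ∀ D₁ ∈ PAt P S, ∀ D₂ ∈ PAt P S, G.ChipEq S D₁ D₂ →
    ∃ L : List (Finset V), IsOrdPart L ∧
      (∀ A ∈ L, IsDisjUnionOf (G.ExtOf D) A) ∧
      D₁ - G.divOP Sᶜ L = D₂ - G.divOP Sᶜ L.reverse ∧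
      (D₁ - G.divOP Sᶜ L) ∈ PAt P (S ∪ G.crossEdges Sᶜ L)

/-- The subposet `S_{Γ∖S₀}(P)`: spanning subgraphs of the form `(Γ∖S₀)∖E(W_•)` on
which `P` is nonempty. -/
def SOf (P : Set (Finset E × (V → ℤ))) (S₀ S : Finset E) : Prop :=
  (∃ L : List (Finset V), IsOrdPart L ∧ S = S₀ ∪ G.crossEdges S₀ᶜ L) ∧
    (PAt P S).Nonempty

/-- `P` is a PT-assignment of degree `d` with degeneracy subset `D`. -/
def IsPT (D : Set (Finset V)) (d : ℤ) (P : Set (Finset E × (V → ℤ))) : Prop :=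
  G.IsUpperD D d P ∧ ∀ S, G.AdmRem D S → G.PTcondA d P S ∧ G.PTcondB D P S

/-- `P` is a numerical PT-assignment of degree `d` with degeneracy subset `D`. -/
def IsNumPT (D : Set (Finset V)) (d : ℤ) (P : Set (Finset E × (V → ℤ))) : Prop :=
  G.IsUpperD D d P ∧ ∀ S, G.AdmRem D S → (PAt P S).ncard = G.cD D S

/-- `P` is a weak PT-assignment of degree `d` with degeneracy subset `D`. -/
def IsWeakPT (D : Set (Finset V)) (d : ℤ) (P : Set (Finset E × (V → ℤ))) : Prop :=
  G.IsUpperD D d P ∧ ∀ S, G.SOf P ∅ S → G.PTcondA d P S ∧ G.PTcondB D P S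

/-- `P` is a weak numerical PT-assignment of degree `d` with degeneracy subset `D`. -/
def IsWeakNumPT (D : Set (Finset V)) (d : ℤ) (P : Set (Finset E × (V → ℤ))) : Prop :=
  G.IsUpperD D d P ∧ (PAt P ∅).ncard = G.cD D ∅

/-- The subgraph of `Γ` with vertex set `U` and those edges of `T` lying inside `U`,
regarded as a multigraph in its own right. -/
def subMG (U : Finset V) (T : Finset E) :
    Multigraph {v // v ∈ U} {e // e ∈ T ∩ G.edgesIn U} where
  src e := ⟨G.src e.1, (Finset.mem_filter.mp (Finset.mem_inter.mp e.2).2).2.1⟩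
  tgt e := ⟨G.tgt e.1, (Finset.mem_filter.mp (Finset.mem_inter.mp e.2).2).2.2⟩

/-- The subgraph of `(W, T)` induced on `W` is a (spanning) forest of `Γ[W]`. -/
def ForestOn (W : Finset V) (T : Finset E) : Prop :=
  (T ∩ G.edgesIn W).card + (G.comps T W).card = W.card

/-- The minimal `D`-admissible spanning subgraph `Γ∖R` is adapted to `W`. -/
def AdaptedTo (D : Set (Finset V)) (R : Finset E) (W : Finset V) : Prop :=
  G.MinAdm D R ∧ G.ForestOn W Rᶜ ∧ G.ForestOn Wᶜ Rᶜ ∧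
    G.valBtwIn Rᶜ W Wᶜ = (if W ∈ D then 0 else 1)

/-- The quantity `I(F)_W + b₁(Γ[W]) + b₀(F[W]) - 1` defining `𝔫^I_W` from a forest
function `I`, computed using the minimal admissible spanning subgraph `Γ∖R`. -/
def nOfI (I : Finset E → (V → ℤ)) (R : Finset E) (W : Finset V) : ℤ :=
  divSum (I R) W + ((G.edgesIn W).card : ℤ) - (W.card : ℤ) +
    ((G.comps Finset.univ W).card : ℤ) + ((G.comps Rᶜ W).card : ℤ) - 1

/-- The defining conditions for the divisor `I_𝔫(F)` at a minimal admissible spanning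
subgraph `F = Γ∖R`: on the vertex set of each connected component `F_i` of `F` the
divisor has total value `|𝔫(F_i)|`, and for each edge `e` of `F`, on each of the two
pieces in which `e` splits its component, it has total value given by the restricted
V-stability `𝔫(F_{i_e})`. -/
def ForestDivCond (n : Finset V → ℤ) (d : ℤ) (R : Finset E) (Dv : V → ℤ) : Prop :=
  (∀ C ∈ G.compsRem R, divSum Dv C = G.extendV n d C - ((R ∩ G.edgesIn C).card : ℤ)) ∧
  ∀ e ∈ Rᶜ,
    (divSum Dv (G.comp (Rᶜ \ {e}) Finset.univ (G.src e)) =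
      G.extendV n d (G.comp (Rᶜ \ {e}) Finset.univ (G.src e)) -
        (G.eIn (R ∩ G.edgesIn (G.comp Rᶜ Finset.univ (G.src e)))
          (G.comp (Rᶜ \ {e}) Finset.univ (G.src e)) : ℤ)) ∧
    (divSum Dv (G.comp (Rᶜ \ {e}) Finset.univ (G.tgt e)) =
      G.extendV n d (G.comp (Rᶜ \ {e}) Finset.univ (G.tgt e)) -
        (G.eIn (R ∩ G.edgesIn (G.comp Rᶜ Finset.univ (G.src e)))
          (G.comp (Rᶜ \ {e}) Finset.univ (G.tgt e)) : ℤ))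

/-- A morphism of graphs `f : Γ → Γ'` (a contraction of a set of edges followed by an
isomorphism): it is given by a map on vertices and an injective pullback map on
edges; non-contracted edges have matching endpoints, contracted edges have their two
endpoints identified, and each fiber over a vertex of `Γ'` is nonempty and connected
via contracted edges. -/
structure Hom where
  fV : V → V'
  fE : E' → E
  fE_inj : Function.Injective fE
  ends : ∀ e' : E',
    (fV (G.src (fE e')) = G'.src e' ∧ fV (G.tgt (fE e')) = G'.tgt e') ∨
    (fV (G.src (fE e')) = G'.tgt e' ∧ fV (G.tgt (fE e')) = G'.src e')
  contr : ∀ e : E, (∀ e' : E', fE e' ≠ e) → fV (G.src e) = fV (G.tgt e)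
  fibers : ∀ v' : V', G.IsConn (Finset.univ.filter (fun e => ∀ e' : E', fE e' ≠ e))
      (Finset.univ.filter (fun v => fV v = v'))

variable {G G'}

/-- `f_V^{-1}(Z)`. -/
def Hom.preV (f : G.Hom G') (Z : Finset V') : Finset V :=
  Finset.univ.filter (fun v => f.fV v ∈ Z)

/-- The set of edges contracted by `f`. -/
def Hom.contracted (f : G.Hom G') : Finset E :=
  Finset.univ.filter (fun e => ∀ e' : E', f.fE e' ≠ e)

/-- The push-forward `f_* : 𝕆^d(Γ) → 𝕆^d(Γ')`. -/
def Hom.pushO (f : G.Hom G') (p : Finset E × (V → ℤ)) : Finset E' × (V' → ℤ) :=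
  (Finset.univ.filter (fun e' => f.fE e' ∈ p.1),
   fun v' => divSum p.2 (f.preV {v'}) + (G.eIn (p.1 ∩ f.contracted) (f.preV {v'}) : ℤ))

end Multigraph

/-- The cycle multigraph `C_n`, with vertices `v_i` for `i ∈ Fin n` and edges `e_i`
joining `v_i` and `v_{i+1}` (indices mod `n`). -/
def cycleMG (n : ℕ) [NeZero n] : Multigraph (Fin n) (Fin n) :=
  ⟨fun i => i, fun i => i + 1⟩

/-- The cyclic interval `V_{ij} = {v_{i+1}, …, v_j}` of vertices of the cycle `C_n`. -/
def Vij {n : ℕ} [NeZero n] (i j : Fin n) : Finset (Fin n) :=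
  Finset.univ.filter (fun v => 1 ≤ (v - i).val ∧ (v - i).val ≤ (j - i).val)

namespace Multigraph

section Aux

set_option linter.unusedSectionVars false

variable {V E : Type}
variable [Fintype V] [DecidableEq V] [Fintype E] [DecidableEq E]
variable {G : Multigraph V E}

lemma step_symm {T : Finset E} {W : Finset V} {a b : V} (h : G.Step T W a b) :
    G.Step T W b a := by
  obtain ⟨ha, hb, e, he, hee⟩ := h
  exact ⟨hb, ha, e, he, hee.symm⟩

lemma linked_symm {T : Finset E} {W : Finset V} {a b : V} (h : G.Linked T W a b) :
    G.Linked T W b a :=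
  by haveI : Std.Symm (G.Step T W) := ⟨fun _ _ h => step_symm h⟩; exact Relation.ReflTransGen.symmetric.symm _ _ h

lemma linked_mono_W {T : Finset E} {W W' : Finset V} (hW : W ⊆ W') {a b : V}
    (h : G.Linked T W a b) : G.Linked T W' a b :=
  Relation.ReflTransGen.mono (fun _ _ hs => ⟨hW hs.1, hW hs.2.1, hs.2.2⟩) _ _ h

lemma linked_mono_T {T T' : Finset E} (hT : T ⊆ T') {W : Finset V} {a b : V}
    (h : G.Linked T W a b) : G.Linked T' W a b := by
  refine Relation.ReflTransGen.mono (fun x y hs => ?_) _ _ h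
  obtain ⟨hx, hy, e, he, hee⟩ := hs
  exact ⟨hx, hy, e, hT he, hee⟩

lemma mem_comp {T : Finset E} {W : Finset V} {v u : V} :
    u ∈ G.comp T W v ↔ u ∈ W ∧ G.Linked T W v u := by
  unfold comp; exact Finset.mem_filter

lemma self_mem_comp {T : Finset E} {W : Finset V} {v : V} (hv : v ∈ W) :
    v ∈ G.comp T W v := mem_comp.mpr ⟨hv, Relation.ReflTransGen.refl⟩

lemma comp_subset {T : Finset E} {W : Finset V} {v : V} : G.comp T W v ⊆ W := by
  unfold comp; exact Finset.filter_subset _ _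

lemma comp_closed {T : Finset E} {W : Finset V} {v a c : V} (ha : a ∈ G.comp T W v)
    (h : G.Step T W a c) : c ∈ G.comp T W v :=
  mem_comp.mpr ⟨h.2.1, (mem_comp.mp ha).2.tail h⟩

lemma comp_eq_of_mem {T : Finset E} {W : Finset V} {v u : V} (hu : u ∈ G.comp T W v) :
    G.comp T W u = G.comp T W v := by
  obtain ⟨huW, hvu⟩ := mem_comp.mp hu
  ext w
  simp only [mem_comp]
  exact and_congr_right fun _ =>
    ⟨fun h => hvu.trans h, fun h => (linked_symm hvu).trans h⟩

lemma mem_comps {T : Finset E} {W : Finset V} {C : Finset V} :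
    C ∈ G.comps T W ↔ ∃ v ∈ W, G.comp T W v = C := by
  unfold comps; exact Finset.mem_image

lemma comps_disjoint {T : Finset E} {W : Finset V} {C₁ C₂ : Finset V}
    (h₁ : C₁ ∈ G.comps T W) (h₂ : C₂ ∈ G.comps T W) (hne : C₁ ≠ C₂) :
    Disjoint C₁ C₂ := by
  obtain ⟨v₁, _, rfl⟩ := mem_comps.mp h₁
  obtain ⟨v₂, _, rfl⟩ := mem_comps.mp h₂
  rw [Finset.disjoint_left]
  intro u hu₁ hu₂
  exact hne ((comp_eq_of_mem hu₁).symm.trans (comp_eq_of_mem hu₂))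

lemma biUnion_comps {T : Finset E} {W : Finset V} :
    (G.comps T W).biUnion id = W := by
  ext v
  simp only [Finset.mem_biUnion, id]
  constructor
  · rintro ⟨C, hC, hv⟩
    obtain ⟨u, hu, rfl⟩ := mem_comps.mp hC
    exact (mem_comp.mp hv).1
  · intro hv
    exact ⟨G.comp T W v, mem_comps.mpr ⟨v, hv, rfl⟩, self_mem_comp hv⟩

lemma sum_comps_vertex {β : Type} [AddCommMonoid β] {T : Finset E} {W : Finset V}
    (f : V → β) : ∑ C ∈ G.comps T W, ∑ v ∈ C, f v = ∑ v ∈ W, f v := by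
  have h := Finset.sum_biUnion (s := G.comps T W) (t := id) (f := f)
    (fun C₁ h₁ C₂ h₂ hne => comps_disjoint h₁ h₂ hne)
  rw [biUnion_comps] at h
  exact h.symm

lemma linked_restrict {T : Finset E} {W Z : Finset V}
    (hcl : ∀ a ∈ Z, ∀ c, G.Step T W a c → c ∈ Z) {a b : V} (ha : a ∈ Z)
    (h : G.Linked T W a b) : b ∈ Z ∧ G.Linked T Z a b := by
  induction h with
  | refl => exact ⟨ha, Relation.ReflTransGen.refl⟩
  | tail h₁ h₂ ih =>
    obtain ⟨hc, hl⟩ := ih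
    have hb := hcl _ hc _ h₂
    obtain ⟨_, _, e, he, hee⟩ := h₂
    exact ⟨hb, hl.tail ⟨hc, hb, e, he, hee⟩⟩

lemma isConn_comp {T : Finset E} {W : Finset V} {v : V} (hv : v ∈ W) :
    G.IsConn T (G.comp T W v) := by
  refine ⟨⟨v, self_mem_comp hv⟩, fun a ha b hb => ?_⟩
  have hcl : ∀ x ∈ G.comp T W v, ∀ c, G.Step T W x c → c ∈ G.comp T W v :=
    fun x hx c hc => comp_closed hx hc
  have h1 := (linked_restrict hcl (self_mem_comp hv) (mem_comp.mp ha).2).2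
  have h2 := (linked_restrict hcl (self_mem_comp hv) (mem_comp.mp hb).2).2
  exact (linked_symm h1).trans h2

lemma isConn_mono_T {T T' : Finset E} (hT : T ⊆ T') {W : Finset V}
    (h : G.IsConn T W) : G.IsConn T' W :=
  ⟨h.1, fun a ha b hb => linked_mono_T hT (h.2 a ha b hb)⟩

lemma linked_escape {T : Finset E} {W Z : Finset V} {a b : V}
    (h : G.Linked T W a b) (ha : a ∈ Z) :
    b ∈ Z ∨ ∃ x ∈ Z, ∃ y, y ∉ Z ∧ G.Step T W x y := by
  induction h with
  | refl => exact Or.inl ha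
  | @tail m k h₁ h₂ ih =>
    rcases ih with hm | hesc
    · by_cases hk : k ∈ Z
      · exact Or.inl hk
      · exact Or.inr ⟨m, hm, k, hk, h₂⟩
    · exact Or.inr hesc

lemma exists_boundary (hG : G.IsConn Finset.univ Finset.univ) {Z : Finset V}
    (hne : Z.Nonempty) (hproper : Z ≠ Finset.univ) :
    ∃ x ∈ Z, ∃ y, y ∉ Z ∧ G.Step Finset.univ Finset.univ x y := by
  obtain ⟨a, ha⟩ := hne
  obtain ⟨b, hb⟩ : ∃ b, b ∉ Z := by
    by_contra h
    push_neg at h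
    exact hproper (Finset.eq_univ_iff_forall.mpr h)
  rcases linked_escape (hG.2 a (Finset.mem_univ a) b (Finset.mem_univ b)) ha with h | h
  · exact absurd h hb
  · exact h

lemma BCon_compl {Z : Finset V} (h : Z ∈ G.BCon) : Zᶜ ∈ G.BCon := by
  obtain ⟨h1, h2⟩ := h
  refine ⟨h2, ?_⟩
  rwa [compl_compl]

/-- If `W` is nonempty connected, every component of `Γ[Wᶜ]` is biconnected. -/
lemma compl_comp_mem_BCon (hG : G.IsConn Finset.univ Finset.univ)
    {W : Finset V} (hW : G.IsConn Finset.univ W)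
    {Z : Finset V} (hZmem : Z ∈ G.comps Finset.univ Wᶜ) : Z ∈ G.BCon := by
  obtain ⟨u, hu, rfl⟩ := mem_comps.mp hZmem
  set Z := G.comp Finset.univ Wᶜ u with hZdef
  have hZconn : G.IsConn Finset.univ Z := isConn_comp hu
  have hWsub : W ⊆ Zᶜ := by
    intro w hw
    rw [Finset.mem_compl]
    intro hwZ
    exact Finset.mem_compl.mp (comp_subset hwZ) hw
  have hkey : ∀ a ∈ Zᶜ, ∃ w ∈ W, G.Linked Finset.univ Zᶜ a w := by
    intro a ha
    by_cases haW : a ∈ W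
    · exact ⟨a, haW, Relation.ReflTransGen.refl⟩
    · have haWc : a ∈ Wᶜ := Finset.mem_compl.mpr haW
      have hZ'sub : G.comp Finset.univ Wᶜ a ⊆ Zᶜ := by
        intro x hx
        rw [Finset.mem_compl]
        intro hxZ
        have hZZ : G.comp Finset.univ Wᶜ a = Z :=
          (comp_eq_of_mem hx).symm.trans (comp_eq_of_mem hxZ)
        exact Finset.mem_compl.mp ha (hZZ ▸ self_mem_comp haWc)
      have hZ'ne : (G.comp Finset.univ Wᶜ a).Nonempty := ⟨a, self_mem_comp haWc⟩
      have hZ'proper : G.comp Finset.univ Wᶜ a ≠ Finset.univ := by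
        intro h
        obtain ⟨w0, hw0⟩ := hW.1
        have hw0' : w0 ∈ G.comp Finset.univ Wᶜ a := h ▸ Finset.mem_univ w0
        exact Finset.mem_compl.mp (comp_subset hw0') hw0
      obtain ⟨x, hx, y, hy, hstep⟩ := exists_boundary hG hZ'ne hZ'proper
      have hyW : y ∈ W := by
        by_contra hyW
        obtain ⟨_, _, e, he, hee⟩ := hstep
        exact hy (comp_closed hx ⟨comp_subset hx, Finset.mem_compl.mpr hyW, e, he, hee⟩)
      have hax : G.Linked Finset.univ (G.comp Finset.univ Wᶜ a) a x :=
        (linked_restrict (fun p hp c hc => comp_closed hp hc) (self_mem_comp haWc)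
          (mem_comp.mp hx).2).2
      have hax' : G.Linked Finset.univ Zᶜ a x := linked_mono_W hZ'sub hax
      have hxy : G.Linked Finset.univ Zᶜ x y := by
        obtain ⟨_, _, e, he, hee⟩ := hstep
        exact Relation.ReflTransGen.single ⟨hZ'sub hx, hWsub hyW, e, he, hee⟩
      exact ⟨y, hyW, hax'.trans hxy⟩
  have hconn : G.IsConn Finset.univ Zᶜ := by
    obtain ⟨w0, hw0⟩ := hW.1
    refine ⟨⟨w0, hWsub hw0⟩, fun a ha b hb => ?_⟩
    obtain ⟨wa, hwa, hla⟩ := hkey a ha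
    obtain ⟨wb, hwb, hlb⟩ := hkey b hb
    exact (hla.trans (linked_mono_W hWsub (hW.2 wa hwa wb hwb))).trans (linked_symm hlb)
  exact ⟨hZconn, hconn⟩

lemma comps_of_isConn {W : Finset V} (hW : G.IsConn Finset.univ W) :
    G.comps Finset.univ W = {W} := by
  unfold comps
  have hconst : ∀ v ∈ W, G.comp Finset.univ W v = W := by
    intro v hv
    refine Finset.Subset.antisymm comp_subset (fun u hu => ?_)
    exact mem_comp.mpr ⟨hu, hW.2 v hv u hu⟩
  rw [Finset.image_congr (g := fun _ => W) (fun v hv => hconst v hv)]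
  exact Finset.image_const hW.1 W

lemma card_split (S : Finset E) (W : Finset V) :
    S.card = G.eIn S W + G.eIn S Wᶜ + G.valBtwIn S W Wᶜ := by
  unfold eIn valBtwIn
  rw [Finset.card_filter, Finset.card_filter, Finset.card_filter,
    ← Finset.sum_add_distrib, ← Finset.sum_add_distrib, Finset.card_eq_sum_ones]
  refine Finset.sum_congr rfl (fun e _ => ?_)
  by_cases h1 : G.src e ∈ W <;> by_cases h2 : G.tgt e ∈ W <;>
    simp [h1, h2, Finset.mem_compl]

lemma valBtwIn_eq_valOf {S : Finset E} {W : Finset V}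
    (h : ∀ e : E, ((G.src e ∈ W ∧ G.tgt e ∈ Wᶜ) ∨ (G.src e ∈ Wᶜ ∧ G.tgt e ∈ W)) → e ∈ S) :
    G.valBtwIn S W Wᶜ = G.valOf W := by
  unfold valOf valBtw valBtwIn
  congr 1
  ext e
  simp only [Finset.mem_filter, Finset.mem_univ, true_and]
  exact ⟨fun h' => h'.2, fun hp => ⟨h e hp, hp⟩⟩

lemma eIn_eq_sum_comps {S : Finset E} {A : Finset V} :
    G.eIn S A = ∑ C ∈ G.comps Finset.univ A, G.eIn S C := by
  have hset : S.filter (fun e => G.src e ∈ A ∧ G.tgt e ∈ A) =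
      (G.comps Finset.univ A).biUnion
        (fun C => S.filter (fun e => G.src e ∈ C ∧ G.tgt e ∈ C)) := by
    ext e
    simp only [Finset.mem_biUnion, Finset.mem_filter]
    constructor
    · rintro ⟨heS, hs, ht⟩
      refine ⟨G.comp Finset.univ A (G.src e), mem_comps.mpr ⟨G.src e, hs, rfl⟩,
        heS, self_mem_comp hs, ?_⟩
      exact comp_closed (self_mem_comp hs)
        ⟨hs, ht, e, Finset.mem_univ e, Or.inl ⟨rfl, rfl⟩⟩
    · rintro ⟨C, hC, heS, hs, ht⟩
      obtain ⟨v, hv, rfl⟩ := mem_comps.mp hC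
      exact ⟨heS, comp_subset hs, comp_subset ht⟩
  unfold eIn
  rw [hset, Finset.card_biUnion]
  intro C₁ h₁ C₂ h₂ hne
  have hd := comps_disjoint h₁ h₂ hne
  rw [Finset.disjoint_left] at hd
  rw [Function.onFun, Finset.disjoint_left]
  intro e he₁ he₂
  exact hd (Finset.mem_filter.mp he₁).2.1 (Finset.mem_filter.mp he₂).2.1

lemma cross_mem_S {S : Finset E} {C : Finset V} (hC : C ∈ G.compsRem S) :
    ∀ e : E, ((G.src e ∈ C ∧ G.tgt e ∈ Cᶜ) ∨ (G.src e ∈ Cᶜ ∧ G.tgt e ∈ C)) → e ∈ S := by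
  have hC' : C ∈ G.comps Sᶜ Finset.univ := hC
  obtain ⟨v, hv, rfl⟩ := mem_comps.mp hC'
  intro e he
  by_contra heS
  have heSc : e ∈ Sᶜ := Finset.mem_compl.mpr heS
  rcases he with ⟨h1, h2⟩ | ⟨h1, h2⟩
  · exact Finset.mem_compl.mp h2 (comp_closed h1
      ⟨Finset.mem_univ _, Finset.mem_univ _, e, heSc, Or.inl ⟨rfl, rfl⟩⟩)
  · exact Finset.mem_compl.mp h1 (comp_closed h2
      ⟨Finset.mem_univ _, Finset.mem_univ _, e, heSc, Or.inr ⟨rfl, rfl⟩⟩)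

lemma cross_mem_S_of_compl {S : Finset E} {C Z : Finset V} (hC : C ∈ G.compsRem S)
    (hZ : Z ∈ G.comps Finset.univ Cᶜ) :
    ∀ e : E, ((G.src e ∈ Z ∧ G.tgt e ∈ Zᶜ) ∨ (G.src e ∈ Zᶜ ∧ G.tgt e ∈ Z)) → e ∈ S := by
  obtain ⟨u, hu, rfl⟩ := mem_comps.mp hZ
  intro e he
  rcases he with ⟨h1, h2⟩ | ⟨h1, h2⟩
  · by_cases ht : G.tgt e ∈ Cᶜ
    · exact absurd (comp_closed h1 ⟨comp_subset h1, ht, e, Finset.mem_univ e,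
        Or.inl ⟨rfl, rfl⟩⟩) (Finset.mem_compl.mp h2)
    · have htC : G.tgt e ∈ C := by
        by_contra h
        exact ht (Finset.mem_compl.mpr h)
      exact cross_mem_S hC e (Or.inr ⟨comp_subset h1, htC⟩)
  · by_cases hs : G.src e ∈ Cᶜ
    · exact absurd (comp_closed h2 ⟨comp_subset h2, hs, e, Finset.mem_univ e,
        Or.inr ⟨rfl, rfl⟩⟩) (Finset.mem_compl.mp h1)
    · have hsC : G.src e ∈ C := by
        by_contra h
        exact hs (Finset.mem_compl.mpr h)
      exact cross_mem_S hC e (Or.inl ⟨hsC, comp_subset h2⟩)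

lemma eIn_le_card {S : Finset E} {W : Finset V} : G.eIn S W ≤ S.card :=
  Finset.card_filter_le _ _


variable {n : Finset V → ℤ} {d : ℤ}

lemma isConn_of_compsRem {S : Finset E} {C : Finset V} (hC : C ∈ G.compsRem S) :
    G.IsConn Finset.univ C := by
  have hC' : C ∈ G.comps Sᶜ Finset.univ := hC
  obtain ⟨v, hv, rfl⟩ := mem_comps.mp hC'
  exact isConn_mono_T (Finset.subset_univ _) (isConn_comp hv)

lemma pss_tight (hG : G.IsConn Finset.univ Finset.univ) (hn : G.IsVStab d n)
    {S : Finset E} {Dv : V → ℤ} (hp : (S, Dv) ∈ G.Pss n d)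
    {C : Finset V} (hC : C ∈ G.compsRem S) {Z : Finset V}
    (hZ : Z ∈ G.comps Finset.univ Cᶜ) :
    G.InDeg n d Z ∧ divSum Dv Z + (G.eIn S Z : ℤ) = n Z := by
  have hZB : Z ∈ G.BCon := compl_comp_mem_BCon hG (isConn_of_compsRem hC) hZ
  have hZcB : Zᶜ ∈ G.BCon := BCon_compl hZB
  have h1 : n Z ≤ divSum Dv Z + (G.eIn S Z : ℤ) := hp.2 Z hZB
  have h2 : n Zᶜ ≤ divSum Dv Zᶜ + (G.eIn S Zᶜ : ℤ) := hp.2 Zᶜ hZcB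
  have htot : divSum Dv Finset.univ = d - (S.card : ℤ) := hp.1
  have hsplit : divSum Dv Z + divSum Dv Zᶜ = divSum Dv Finset.univ :=
    Finset.sum_add_sum_compl Z Dv
  have hcs := card_split (G := G) S Z
  have hval : G.valBtwIn S Z Zᶜ = G.valOf Z :=
    valBtwIn_eq_valOf (cross_mem_S_of_compl hC hZ)
  have hone := hn.one Z hZB
  refine ⟨⟨hZB, ?_⟩, ?_⟩
  · show n Z + n Zᶜ + (G.valOf Z : ℤ) - d = 0
    omega
  · omega

lemma pss_component (hG : G.IsConn Finset.univ Finset.univ) (hn : G.IsVStab d n)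
    {S : Finset E} {Dv : V → ℤ} (hp : (S, Dv) ∈ G.Pss n d)
    {C : Finset V} (hC : C ∈ G.compsRem S) :
    C ∈ G.ExtDeg n d ∧ divSum Dv C + (G.eIn S C : ℤ) = G.extendV n d C := by
  have hCconn : G.IsConn Finset.univ C := isConn_of_compsRem hC
  have htight : ∀ Z ∈ G.comps Finset.univ Cᶜ,
      G.InDeg n d Z ∧ divSum Dv Z + (G.eIn S Z : ℤ) = n Z :=
    fun Z hZ => pss_tight hG hn hp hC hZ
  have hmem : C ∈ G.ExtDeg n d :=
    Or.inr ⟨hCconn, fun Z hZ => (htight Z hZ).1⟩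
  refine ⟨hmem, ?_⟩
  have htot : divSum Dv Finset.univ = d - (S.card : ℤ) := hp.1
  have hsplitD : divSum Dv C + divSum Dv Cᶜ = divSum Dv Finset.univ :=
    Finset.sum_add_sum_compl C Dv
  have hDc : divSum Dv Cᶜ = ∑ Z ∈ G.comps Finset.univ Cᶜ, divSum Dv Z :=
    (sum_comps_vertex Dv).symm
  have hcs := card_split (G := G) S C
  have hval : G.valBtwIn S C Cᶜ = G.valOf C := valBtwIn_eq_valOf (cross_mem_S hC)
  have heC : G.eIn S Cᶜ = ∑ Z ∈ G.comps Finset.univ Cᶜ, G.eIn S Z := eIn_eq_sum_comps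
  have hsum_n : ∑ Z ∈ G.comps Finset.univ Cᶜ, (divSum Dv Z + (G.eIn S Z : ℤ)) =
      ∑ Z ∈ G.comps Finset.univ Cᶜ, n Z :=
    Finset.sum_congr rfl (fun Z hZ => (htight Z hZ).2)
  rw [Finset.sum_add_distrib] at hsum_n
  have hcompsC : G.comps Finset.univ C = {C} := comps_of_isConn hCconn
  have hfilter : (G.comps Finset.univ Cᶜ).filter (fun Z => ¬ G.InDeg n d Z) = ∅ := by
    rw [Finset.filter_eq_empty_iff]
    intro Z hZ h
    exact h (htight Z hZ).1
  have hext : G.extendV n d C =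
      d - (∑ Z ∈ G.comps Finset.univ Cᶜ, n Z) - (G.valOf C : ℤ) := by
    unfold extendV connVal
    rw [hcompsC, Finset.sum_singleton, hfilter]
    simp
  rw [hext]
  have hcs' : (S.card : ℤ) = (G.eIn S C : ℤ) + (G.eIn S Cᶜ : ℤ) + (G.valOf C : ℤ) := by
    rw [hval] at hcs
    exact_mod_cast hcs
  have heC' : (G.eIn S Cᶜ : ℤ) = ∑ Z ∈ G.comps Finset.univ Cᶜ, (G.eIn S Z : ℤ) := by
    rw [heC]
    push_cast
    rfl
  linarith

lemma divSum_divOrient (A : Finset E) (o : E → Bool) (W : Finset V) :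
    divSum (G.divOrient A o) W =
      ((A.filter (fun e => G.orientHead o e ∈ W)).card : ℤ) := by
  unfold divSum divOrient
  rw [← Nat.cast_sum]
  congr 1
  symm
  rw [Finset.card_eq_sum_card_fiberwise (f := fun e => G.orientHead o e) (t := W)
      (s := A.filter (fun e => G.orientHead o e ∈ W))
      (fun x hx => (Finset.mem_filter.mp hx).2)]
  refine Finset.sum_congr rfl (fun v hv => ?_)
  congr 1
  ext e
  simp only [Finset.mem_filter]
  constructor
  · rintro ⟨⟨heA, _⟩, hhe⟩
    exact ⟨heA, hhe⟩
  · rintro ⟨heA, hhe⟩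
    exact ⟨⟨heA, hhe ▸ hv⟩, hhe⟩

lemma pss_upper : G.IsUpper d (G.Pss n d) := by
  refine ⟨fun p hp => hp.1, fun p hpO q hq hge => ?_⟩
  obtain ⟨hsub, o, hD⟩ := hge
  refine ⟨hpO, fun W hWB => ?_⟩
  have hqW := hq.2 W hWB
  have hqD : divSum q.2 W = divSum p.2 W - divSum (G.divOrient (q.1 \ p.1) o) W := by
    rw [hD]
    unfold divSum
    simp only [Pi.sub_apply]
    rw [Finset.sum_sub_distrib]
  have hunion : p.1 ∪ (q.1 \ p.1) = q.1 := Finset.union_sdiff_of_subset hsub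
  have heq : G.eIn q.1 W = G.eIn p.1 W + G.eIn (q.1 \ p.1) W := by
    unfold eIn
    rw [← Finset.card_union_of_disjoint
      (Finset.disjoint_filter_filter (Finset.disjoint_sdiff (s := p.1) (t := q.1))),
      ← Finset.filter_union, hunion]
  have hle : (G.eIn (q.1 \ p.1) W : ℤ) ≤ divSum (G.divOrient (q.1 \ p.1) o) W := by
    rw [divSum_divOrient]
    have hss : (q.1 \ p.1).filter (fun e => G.src e ∈ W ∧ G.tgt e ∈ W) ⊆
        (q.1 \ p.1).filter (fun e => G.orientHead o e ∈ W) := by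
      intro e he
      obtain ⟨heA, hs, ht⟩ := Finset.mem_filter.mp he
      refine Finset.mem_filter.mpr ⟨heA, ?_⟩
      unfold orientHead
      split <;> assumption
    exact_mod_cast Finset.card_le_card hss
  rw [hqD, heq] at hqW
  push_cast at hqW ⊢
  linarith


lemma pss_divSum_bound {S : Finset E} {Dv : V → ℤ} (hp : (S, Dv) ∈ G.Pss n d)
    {Z : Finset V} (hZ : Z ∈ G.BCon) :
    -(|d| + (∑ W : Finset V, |n W|) + (Fintype.card E : ℤ)) ≤ divSum Dv Z ∧
      divSum Dv Z ≤ |d| + (∑ W : Finset V, |n W|) + (Fintype.card E : ℤ) := by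
  have hN : ∀ W : Finset V, |n W| ≤ ∑ W : Finset V, |n W| :=
    fun W => Finset.single_le_sum (fun i _ => abs_nonneg (n i)) (Finset.mem_univ W)
  have h1 : n Z ≤ divSum Dv Z + (G.eIn S Z : ℤ) := hp.2 Z hZ
  have h2 : n Zᶜ ≤ divSum Dv Zᶜ + (G.eIn S Zᶜ : ℤ) := hp.2 Zᶜ (BCon_compl hZ)
  have htot : divSum Dv Finset.univ = d - (S.card : ℤ) := hp.1
  have hsplit : divSum Dv Z + divSum Dv Zᶜ = divSum Dv Finset.univ :=
    Finset.sum_add_sum_compl Z Dv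
  have hb1 : (G.eIn S Z : ℤ) ≤ (Fintype.card E : ℤ) := by
    exact_mod_cast le_trans (eIn_le_card (G := G))
      (le_trans (Finset.card_le_univ S) (le_of_eq Finset.card_univ))
  have hb2 : (G.eIn S Zᶜ : ℤ) ≤ (S.card : ℤ) := by
    exact_mod_cast eIn_le_card (G := G)
  have hb3 : (S.card : ℤ) ≤ (Fintype.card E : ℤ) := by
    exact_mod_cast le_trans (Finset.card_le_univ S) (le_of_eq Finset.card_univ)
  have hb4 : (0 : ℤ) ≤ (S.card : ℤ) := Int.natCast_nonneg _
  have hb5 : (0 : ℤ) ≤ (G.eIn S Z : ℤ) := Int.natCast_nonneg _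
  have hZa := abs_le.mp (hN Z)
  have hZca := abs_le.mp (hN Zᶜ)
  constructor <;> linarith [le_abs_self d, neg_abs_le d, abs_nonneg d]

lemma pss_vertex_bound (hG : G.IsConn Finset.univ Finset.univ)
    {S : Finset E} {Dv : V → ℤ} (hp : (S, Dv) ∈ G.Pss n d) (v : V) :
    |Dv v| ≤ |d| + (Fintype.card E : ℤ) +
      (Fintype.card V : ℤ) * (|d| + (∑ W : Finset V, |n W|) + (Fintype.card E : ℤ)) := by
  set B := |d| + (∑ W : Finset V, |n W|) + (Fintype.card E : ℤ) with hB
  have hBnn : (0 : ℤ) ≤ B := by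
    have : (0 : ℤ) ≤ ∑ W : Finset V, |n W| :=
      Finset.sum_nonneg (fun i _ => abs_nonneg (n i))
    have := abs_nonneg d
    have : (0 : ℤ) ≤ (Fintype.card E : ℤ) := Int.natCast_nonneg _
    positivity
  have hvconn : G.IsConn Finset.univ ({v} : Finset V) := by
    refine ⟨⟨v, Finset.mem_singleton_self v⟩, fun a ha b hb => ?_⟩
    rw [Finset.mem_singleton] at ha hb
    subst ha; subst hb
    exact Relation.ReflTransGen.refl
  set K := G.comps Finset.univ ({v} : Finset V)ᶜ with hK
  have hbd : ∀ Z ∈ K, |divSum Dv Z| ≤ B :=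
    fun Z hZ => abs_le.mpr (pss_divSum_bound hp (compl_comp_mem_BCon hG hvconn hZ))
  have hsum : divSum Dv ({v} : Finset V)ᶜ = ∑ Z ∈ K, divSum Dv Z :=
    (sum_comps_vertex Dv).symm
  have h1 : |∑ Z ∈ K, divSum Dv Z| ≤ ∑ Z ∈ K, |divSum Dv Z| :=
    Finset.abs_sum_le_sum_abs _ _
  have h2 : ∑ Z ∈ K, |divSum Dv Z| ≤ ∑ _Z ∈ K, B := Finset.sum_le_sum hbd
  have h3 : ∑ _Z ∈ K, B = (K.card : ℤ) * B := by
    rw [Finset.sum_const, nsmul_eq_mul]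
  have h4 : (K.card : ℤ) ≤ (Fintype.card V : ℤ) := by
    have hle : K.card ≤ (({v} : Finset V)ᶜ).card := by
      rw [hK]
      unfold comps
      exact Finset.card_image_le
    exact_mod_cast le_trans hle
      (le_trans (Finset.card_le_univ _) (le_of_eq Finset.card_univ))
  have h5 : (K.card : ℤ) * B ≤ (Fintype.card V : ℤ) * B :=
    mul_le_mul_of_nonneg_right h4 hBnn
  have hsplit : divSum Dv ({v} : Finset V) + divSum Dv ({v} : Finset V)ᶜ =
      divSum Dv Finset.univ := Finset.sum_add_sum_compl _ _
  have htot : divSum Dv Finset.univ = d - (S.card : ℤ) := hp.1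
  have hsing : divSum Dv ({v} : Finset V) = Dv v := Finset.sum_singleton _ _
  have hb3 : (S.card : ℤ) ≤ (Fintype.card E : ℤ) := by
    exact_mod_cast le_trans (Finset.card_le_univ S) (le_of_eq Finset.card_univ)
  have hb4 : (0 : ℤ) ≤ (S.card : ℤ) := Int.natCast_nonneg _
  have habs := abs_le.mp (le_trans h1 (le_trans h2 (le_of_eq h3)))
  rw [abs_le]
  constructor <;> [skip; skip] <;>
    linarith [le_abs_self d, neg_abs_le d]

lemma pss_finite (hG : G.IsConn Finset.univ Finset.univ) : (G.Pss n d).Finite := by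
  set M := |d| + (Fintype.card E : ℤ) +
    (Fintype.card V : ℤ) * (|d| + (∑ W : Finset V, |n W|) + (Fintype.card E : ℤ)) with hM
  have hsub : G.Pss n d ⊆
      (Set.univ : Set (Finset E)) ×ˢ Set.pi Set.univ (fun _ : V => Set.Icc (-M) M) := by
    intro p hp
    refine ⟨trivial, fun v _ => ?_⟩
    have hp' : (p.1, p.2) ∈ G.Pss n d := hp
    have := pss_vertex_bound hG hp' v
    exact Set.mem_Icc.mpr (abs_le.mp this)
  exact Set.Finite.subset
    (Set.Finite.prod Set.finite_univ (Set.Finite.pi (fun _ => Set.finite_Icc _ _))) hsub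

end Aux



end Multigraph

/-- the semistable set `𝒫_𝔫` of a V-stability condition `𝔫` of degree
`d` on a connected multigraph `Γ` is a finite upper subset of `𝕆^d(Γ)`; moreover, for
every `(Γ∖S, D) ∈ 𝒫_𝔫` and every connected component of `Γ∖S` with vertex set `C`,
one has `C ∈ 𝒟̂(𝔫)` and `D_C + e_S(C) = 𝔫_C` (extended V-function). -/
theorem Pss_finite_upper_and_components
    {V E : Type} [Fintype V] [DecidableEq V] [Fintype E] [DecidableEq E]
    (G : Multigraph V E) (hG : G.IsConn Finset.univ Finset.univ)
    (d : ℤ) (n : Finset V → ℤ) (hn : G.IsVStab d n) :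
    (G.Pss n d).Finite ∧ G.IsUpper d (G.Pss n d) ∧
      ∀ p ∈ G.Pss n d, ∀ C ∈ G.compsRem p.1,
        C ∈ G.ExtDeg n d ∧
        divSum p.2 C + (G.eIn p.1 C : ℤ) = G.extendV n d C := by
  refine ⟨Multigraph.pss_finite hG, Multigraph.pss_upper, fun p hp C hC => ?_⟩
  have hp' : (p.1, p.2) ∈ G.Pss n d := hp
  exact Multigraph.pss_component hG hn hp' hC
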